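/- arXiv:1101.5790 — 2 statements merged into one kernel-verified Lean document; each statement's English description precedes it below -/
import Mathlib

section
/- Let H ∈ (1/2,1), α = 1−H, and T > 0. Then the quadruple integral ∫₀ᵀ∫₀ᵀ∫ᵤᵀ∫ₓᵀ u^(−α) x^(−α) |u−x|^(2H−2) v^(α−1) y^(α−1) |v−y|^(2H−2) dy dv dx du is finite. -/
/-!
Write `K(a, b) = (ab)^{-1/2} |a - b|^{2H-2}`. Since `α ≤ 1/2`, for `u < v` we have
`u^{-α} v^{α-1} = (uv)^{-1/2} (u/v)^{1/2-α} ≤ (uv)^{-1/2}`, and likewise for `x < y`.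
So the integrand is at most `K(u, x) K(v, y)`, and the quadruple integral is at most
`(∫∫_{(0,T)²} K)²`. This double integral is finite because, with `γ = H - 3/2 > -1`,
`K(a, b) ≤ 2 a^γ (b^γ + |a - b|^γ)`: if `a` and `b` differ by more than a factor two,
`|a - b|` is comparable to `max a b`; otherwise `a` and `b` are comparable and `|a - b| ≤ a`.
-/

open MeasureTheory Set
open scoped ENNReal

noncomputable def weightedKernel (H a b : ℝ) : ℝ :=
  a ^ (-1/2 : ℝ) * b ^ (-1/2 : ℝ) * |a - b| ^ (2 * H - 2)

lemma weightedKernel_comm (H a b : ℝ) : weightedKernel H a b = weightedKernel H b a := by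
  rw [weightedKernel, weightedKernel, abs_sub_comm, mul_comm (a ^ _)]

lemma weightedKernel_nonneg (H : ℝ) {a b : ℝ} (ha : 0 ≤ a) (hb : 0 ≤ b) :
    0 ≤ weightedKernel H a b := by
  unfold weightedKernel; positivity

lemma rpow_le_two_mul_rpow_of_half_le {x y β : ℝ} (hx : 0 < x) (hxy : x / 2 ≤ y)
    (hβ : -1 ≤ β) (hβ0 : β ≤ 0) : y ^ β ≤ 2 * x ^ β := by
  have h2 : (1 / 2 : ℝ) ≤ 2 ^ β := by
    calc (1 / 2 : ℝ) = 2 ^ (-1 : ℝ) := by norm_num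
      _ ≤ 2 ^ β := Real.rpow_le_rpow_of_exponent_le one_le_two hβ
  calc y ^ β ≤ (x / 2) ^ β := Real.rpow_le_rpow_of_nonpos (by positivity) hxy hβ0
    _ = x ^ β / 2 ^ β := Real.div_rpow hx.le zero_le_two β
    _ ≤ x ^ β / (1 / 2) := by gcongr
    _ = 2 * x ^ β := by ring

lemma weightedKernel_le_of_two_mul_le {H a b : ℝ} (hH : 1/2 ≤ H) (hH1 : H ≤ 1)
    (hb : 0 < b) (hba : 2 * b ≤ a) :
    weightedKernel H a b ≤ 2 * (a ^ (H - 3/2) * b ^ (H - 3/2)) := by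
  have ha : 0 < a := by linarith
  have hb' : b ^ (-1/2 : ℝ) = b ^ (H - 3/2) * b ^ (1 - H) := by
    rw [← Real.rpow_add hb]; congr 1; ring
  have ha' : a ^ (H - 3/2) = a ^ (-1/2 : ℝ) * (a ^ (1 - H) * a ^ (2 * H - 2)) := by
    rw [← Real.rpow_add ha, ← Real.rpow_add ha]; congr 1; ring
  have hdist : |a - b| ^ (2 * H - 2) ≤ 2 * a ^ (2 * H - 2) :=
    rpow_le_two_mul_rpow_of_half_le ha (by rw [abs_of_pos (by linarith)]; linarith)
      (by linarith) (by linarith)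
  calc weightedKernel H a b
      = a ^ (-1/2 : ℝ) * b ^ (H - 3/2) * (b ^ (1 - H) * |a - b| ^ (2 * H - 2)) := by
        rw [weightedKernel, hb']; ring
    _ ≤ a ^ (-1/2 : ℝ) * b ^ (H - 3/2) * (a ^ (1 - H) * (2 * a ^ (2 * H - 2))) := by
        gcongr
        linarith
    _ = 2 * (a ^ (H - 3/2) * b ^ (H - 3/2)) := by rw [ha']; ring

lemma weightedKernel_le_of_le_two_mul {H a b : ℝ} (hH : 1/2 ≤ H) (hH1 : H < 1)
    (ha : 0 < a) (hab : a ≤ 2 * b) (hba : b ≤ 2 * a) :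
    weightedKernel H a b ≤ 2 * (a ^ (H - 3/2) * |a - b| ^ (H - 3/2)) := by
  have hdist : |a - b| ^ (2 * H - 2) = |a - b| ^ (H - 3/2) * |a - b| ^ (H - 1/2) := by
    rw [← Real.rpow_add' (abs_nonneg _) (by linarith)]; congr 1; ring
  have ha' : a ^ (H - 3/2) = a ^ (-1/2 : ℝ) * a ^ (-1/2 : ℝ) * a ^ (H - 1/2) := by
    rw [← Real.rpow_add ha, ← Real.rpow_add ha]; congr 1; ring
  have hb : b ^ (-1/2 : ℝ) ≤ 2 * a ^ (-1/2 : ℝ) :=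
    rpow_le_two_mul_rpow_of_half_le ha (by linarith) (by norm_num) (by norm_num)
  have hdist_le : |a - b| ≤ a := abs_sub_le_iff.2 ⟨by linarith, by linarith⟩
  calc weightedKernel H a b
      = a ^ (-1/2 : ℝ) * b ^ (-1/2 : ℝ) * (|a - b| ^ (H - 3/2) * |a - b| ^ (H - 1/2)) := by
        rw [weightedKernel, hdist]
    _ ≤ a ^ (-1/2 : ℝ) * (2 * a ^ (-1/2 : ℝ)) * (|a - b| ^ (H - 3/2) * a ^ (H - 1/2)) := by
        gcongr
    _ = 2 * (a ^ (H - 3/2) * |a - b| ^ (H - 3/2)) := by rw [ha']; ring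

lemma weightedKernel_le {H a b : ℝ} (hH : 1/2 ≤ H) (hH1 : H < 1) (ha : 0 < a) (hb : 0 < b) :
    weightedKernel H a b ≤ 2 * a ^ (H - 3/2) * (b ^ (H - 3/2) + |a - b| ^ (H - 3/2)) := by
  rw [show 2 * a ^ (H - 3/2) * (b ^ (H - 3/2) + |a - b| ^ (H - 3/2))
      = 2 * (a ^ (H - 3/2) * b ^ (H - 3/2)) + 2 * (a ^ (H - 3/2) * |a - b| ^ (H - 3/2)) by ring]
  rcases le_total (2 * b) a with hba | hab
  · exact le_add_of_le_of_nonneg (weightedKernel_le_of_two_mul_le hH hH1.le hb hba)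
      (by positivity)
  rcases le_total (2 * a) b with hab' | hba'
  · rw [weightedKernel_comm, mul_comm (a ^ _)]
    exact le_add_of_le_of_nonneg (weightedKernel_le_of_two_mul_le hH hH1.le ha hab')
      (by positivity)
  · exact le_add_of_nonneg_of_le (by positivity)
      (weightedKernel_le_of_le_two_mul hH hH1 ha hab hba')

lemma setLIntegral_Ioo_rpow_lt_top {p T : ℝ} (hp : -1 < p) (hT : 0 < T) :
    ∫⁻ x in Ioo 0 T, ENNReal.ofReal (x ^ p) < ∞ :=
  ((intervalIntegral.integrableOn_Ioo_rpow_iff hT).2 hp).setLIntegral_lt_top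

lemma setLIntegral_Ioo_abs_rpow_lt_top {q T : ℝ} (hq : -1 < q) :
    ∫⁻ t in Ioo (-T) T, ENNReal.ofReal (|t| ^ q) < ∞ := by
  have h := integrableOn_ball_of_norm_le_rpow (μ := volume) (f := fun t : ℝ ↦ |t| ^ q)
    (C := 1) (α := -q) (r := T) (by simp) (by simp; linarith)
    (ae_of_all _ fun t ↦ by simp [abs_of_nonneg (Real.rpow_nonneg (abs_nonneg t) q)])
    (continuous_abs.measurable.pow_const q).aestronglyMeasurable
  rw [Real.ball_eq_Ioo, zero_sub, zero_add] at h
  exact h.setLIntegral_lt_top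

lemma setLIntegral_Ioo_abs_sub_rpow_le {a T : ℝ} (q : ℝ) (ha : a ∈ Icc 0 T) :
    ∫⁻ b in Ioo 0 T, ENNReal.ofReal (|a - b| ^ q)
      ≤ ∫⁻ t in Ioo (-T) T, ENNReal.ofReal (|t| ^ q) := by
  set f : ℝ → ℝ≥0∞ := (Ioo (-T) T).indicator fun t ↦ ENNReal.ofReal (|t| ^ q)
  calc ∫⁻ b in Ioo 0 T, ENNReal.ofReal (|a - b| ^ q)
      = ∫⁻ b in Ioo 0 T, f (a - b) :=
        setLIntegral_congr_fun measurableSet_Ioo fun b hb ↦ by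
          have hab : a - b ∈ Ioo (-T) T :=
            ⟨by linarith [ha.1, hb.2], by linarith [ha.2, hb.1]⟩
          simp only [f, indicator_of_mem hab]
    _ ≤ ∫⁻ b, f (a - b) := setLIntegral_le_lintegral _ _
    _ = ∫⁻ t in Ioo (-T) T, ENNReal.ofReal (|t| ^ q) := by
        rw [lintegral_sub_left_eq_self f a, lintegral_indicator measurableSet_Ioo]

lemma lintegral_weightedKernel_lt_top {H T : ℝ} (hH : 1/2 < H) (hH1 : H < 1) (hT : 0 < T) :
    ∫⁻ a in Ioo 0 T, ∫⁻ b in Ioo 0 T, ENNReal.ofReal (weightedKernel H a b) < ∞ := by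
  set γ := H - 3/2 with hγ_def
  have hγ : -1 < γ := by linarith
  set I := ∫⁻ b in Ioo 0 T, ENNReal.ofReal (b ^ γ)
  set K := ∫⁻ t in Ioo (-T) T, ENNReal.ofReal (|t| ^ γ)
  have hI : I < ∞ := setLIntegral_Ioo_rpow_lt_top hγ hT
  have hK : K < ∞ := setLIntegral_Ioo_abs_rpow_lt_top hγ
  have hinner : ∀ a ∈ Ioo 0 T, ∫⁻ b in Ioo 0 T, ENNReal.ofReal (weightedKernel H a b)
      ≤ ENNReal.ofReal (2 * a ^ γ) * (I + K) := by
    rintro a ⟨ha0, haT⟩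
    calc ∫⁻ b in Ioo 0 T, ENNReal.ofReal (weightedKernel H a b)
        ≤ ∫⁻ b in Ioo 0 T, ENNReal.ofReal (2 * a ^ γ)
            * (ENNReal.ofReal (b ^ γ) + ENNReal.ofReal (|a - b| ^ γ)) :=
          setLIntegral_mono' measurableSet_Ioo fun b ⟨hb0, _⟩ ↦ by
            rw [← ENNReal.ofReal_add (by positivity) (by positivity),
              ← ENNReal.ofReal_mul (by positivity)]
            exact ENNReal.ofReal_le_ofReal (weightedKernel_le hH.le hH1 ha0 hb0)
      _ = ENNReal.ofReal (2 * a ^ γ)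
            * (I + ∫⁻ b in Ioo 0 T, ENNReal.ofReal (|a - b| ^ γ)) := by
          rw [lintegral_const_mul' _ _ ENNReal.ofReal_ne_top, lintegral_add_left (by fun_prop)]
      _ ≤ ENNReal.ofReal (2 * a ^ γ) * (I + K) := by
          gcongr
          exact setLIntegral_Ioo_abs_sub_rpow_le γ ⟨ha0.le, haT.le⟩
  calc ∫⁻ a in Ioo 0 T, ∫⁻ b in Ioo 0 T, ENNReal.ofReal (weightedKernel H a b)
      ≤ ∫⁻ a in Ioo 0 T, ENNReal.ofReal (2 * a ^ γ) * (I + K) :=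
        setLIntegral_mono' measurableSet_Ioo hinner
    _ = 2 * I * (I + K) := by
        simp_rw [ENNReal.ofReal_mul zero_le_two, ENNReal.ofReal_ofNat]
        rw [lintegral_mul_const' _ _ (ENNReal.add_lt_top.2 ⟨hI, hK⟩).ne,
          lintegral_const_mul' _ _ ENNReal.ofNat_ne_top]
    _ < ∞ := by finiteness

lemma rpow_neg_mul_rpow_sub_one_le {u v α : ℝ} (hu : 0 < u) (huv : u ≤ v) (hα : α ≤ 1/2) :
    u ^ (-α) * v ^ (α - 1) ≤ u ^ (-1/2 : ℝ) * v ^ (-1/2 : ℝ) := by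
  have hv : 0 < v := hu.trans_le huv
  have hu' : u ^ (-α) = u ^ (-1/2 : ℝ) * u ^ (1/2 - α) := by
    rw [← Real.rpow_add hu]; congr 1; ring
  have hv' : v ^ (α - 1) = v ^ (-1/2 : ℝ) / v ^ (1/2 - α) := by
    rw [← Real.rpow_sub hv]; congr 1; ring
  have hratio : u ^ (1/2 - α) / v ^ (1/2 - α) ≤ 1 :=
    div_le_one_of_le₀ (Real.rpow_le_rpow hu.le huv (by linarith)) (by positivity)
  calc u ^ (-α) * v ^ (α - 1)
      = u ^ (-1/2 : ℝ) * v ^ (-1/2 : ℝ) * (u ^ (1/2 - α) / v ^ (1/2 - α)) := by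
        rw [hu', hv']; ring
    _ ≤ u ^ (-1/2 : ℝ) * v ^ (-1/2 : ℝ) * 1 := by gcongr
    _ = u ^ (-1/2 : ℝ) * v ^ (-1/2 : ℝ) := mul_one _

lemma integrand_le_weightedKernel_mul {H α u v x y : ℝ} (hα : α ≤ 1/2)
    (hu : 0 < u) (huv : u ≤ v) (hx : 0 < x) (hxy : x ≤ y) :
    u ^ (-α) * x ^ (-α) * |u - x| ^ (2*H - 2) * v ^ (α - 1) * y ^ (α - 1) * |v - y| ^ (2*H - 2)
      ≤ weightedKernel H u x * weightedKernel H v y := by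
  have hv : 0 < v := hu.trans_le huv
  have hy : 0 < y := hx.trans_le hxy
  calc u ^ (-α) * x ^ (-α) * |u - x| ^ (2*H - 2) * v ^ (α - 1) * y ^ (α - 1)
        * |v - y| ^ (2*H - 2)
      = (u ^ (-α) * v ^ (α - 1)) * (x ^ (-α) * y ^ (α - 1))
          * (|u - x| ^ (2*H - 2) * |v - y| ^ (2*H - 2)) := by ring
    _ ≤ (u ^ (-1/2 : ℝ) * v ^ (-1/2 : ℝ)) * (x ^ (-1/2 : ℝ) * y ^ (-1/2 : ℝ))
          * (|u - x| ^ (2*H - 2) * |v - y| ^ (2*H - 2)) := by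
        gcongr ?_ * ?_ * _
        · exact rpow_neg_mul_rpow_sub_one_le hu huv hα
        · exact rpow_neg_mul_rpow_sub_one_le hx hxy hα
    _ = weightedKernel H u x * weightedKernel H v y := by
        simp only [weightedKernel]; ring

lemma setLIntegral_integrand_le_weightedKernel_mul {H α T u x : ℝ} (hα : α ≤ 1/2)
    (hu : 0 < u) (hx : 0 < x) :
    ∫⁻ v in Ioo u T, ∫⁻ y in Ioo x T, ENNReal.ofReal (u ^ (-α) * x ^ (-α)
        * |u - x| ^ (2*H - 2) * v ^ (α - 1) * y ^ (α - 1) * |v - y| ^ (2*H - 2))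
      ≤ ENNReal.ofReal (weightedKernel H u x)
          * ∫⁻ v in Ioo 0 T, ∫⁻ y in Ioo 0 T, ENNReal.ofReal (weightedKernel H v y) := by
  calc ∫⁻ v in Ioo u T, ∫⁻ y in Ioo x T, ENNReal.ofReal (u ^ (-α) * x ^ (-α)
        * |u - x| ^ (2*H - 2) * v ^ (α - 1) * y ^ (α - 1) * |v - y| ^ (2*H - 2))
      ≤ ∫⁻ v in Ioo u T, ∫⁻ y in Ioo x T,
          ENNReal.ofReal (weightedKernel H u x) * ENNReal.ofReal (weightedKernel H v y) :=
        setLIntegral_mono' measurableSet_Ioo fun v hv ↦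
          setLIntegral_mono' measurableSet_Ioo fun y hy ↦ by
            rw [← ENNReal.ofReal_mul (weightedKernel_nonneg H hu.le hx.le)]
            exact ENNReal.ofReal_le_ofReal
              (integrand_le_weightedKernel_mul hα hu hv.1.le hx hy.1.le)
    _ = ENNReal.ofReal (weightedKernel H u x)
          * ∫⁻ v in Ioo u T, ∫⁻ y in Ioo x T, ENNReal.ofReal (weightedKernel H v y) := by
        simp_rw [lintegral_const_mul' _ _ ENNReal.ofReal_ne_top]
    _ ≤ ENNReal.ofReal (weightedKernel H u x)
          * ∫⁻ v in Ioo 0 T, ∫⁻ y in Ioo 0 T, ENNReal.ofReal (weightedKernel H v y) := by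
        gcongr _ * ?_
        exact (lintegral_mono fun v ↦ lintegral_mono_set (Ioo_subset_Ioo_left hx.le)).trans
          (lintegral_mono_set (Ioo_subset_Ioo_left hu.le))

theorem stmt14 (H α T : ℝ) (hH : 1/2 < H) (hH1 : H < 1)
    (hα : α = 1 - H) (hT : 0 < T) :
    (∫⁻ u in Set.Ioo (0:ℝ) T, ∫⁻ x in Set.Ioo (0:ℝ) T,
      ∫⁻ v in Set.Ioo u T, ∫⁻ y in Set.Ioo x T,
        ENNReal.ofReal (u ^ (-α) * x ^ (-α) * |u - x| ^ (2*H - 2) *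
          v ^ (α - 1) * y ^ (α - 1) * |v - y| ^ (2*H - 2))) < ⊤ := by
  have hJ := lintegral_weightedKernel_lt_top hH hH1 hT
  calc _ ≤ ∫⁻ u in Ioo 0 T, ∫⁻ x in Ioo 0 T, ENNReal.ofReal (weightedKernel H u x)
          * ∫⁻ v in Ioo 0 T, ∫⁻ y in Ioo 0 T, ENNReal.ofReal (weightedKernel H v y) :=
        setLIntegral_mono' measurableSet_Ioo fun u hu ↦ setLIntegral_mono' measurableSet_Ioo
          fun x hx ↦ setLIntegral_integrand_le_weightedKernel_mul (by linarith) hu.1 hx.1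
    _ = (∫⁻ u in Ioo 0 T, ∫⁻ x in Ioo 0 T, ENNReal.ofReal (weightedKernel H u x))
          * ∫⁻ v in Ioo 0 T, ∫⁻ y in Ioo 0 T, ENNReal.ofReal (weightedKernel H v y) := by
        simp_rw [lintegral_mul_const' _ _ hJ.ne]
    _ < ⊤ := ENNReal.mul_lt_top hJ hJ
end

section
/- Let T > 0, α ∈ (0,1/2), and let ξ : [0,T] → ℝ be a continuous function that is γ-Hölder continuous for some γ > 0. Then (T−t)^(1−2α) ∫₀ᵗ ξ(s)² (T−s)^(2α−2) ds → ξ(T)²/(1−2α) as t → T⁻. -/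
/-!
The weight `w(s) = (T - s) ^ (2α - 2)` has `∫₀ᵗ w = ((T - t) ^ (2α - 1) - T ^ (2α - 1)) / (1 - 2α)`,
so `(T - t) ^ (1 - 2α) ∫₀ᵗ w → 1 / (1 - 2α)` and the normalized integral is a weighted average in
which the mass of every `[0, c]` with `c < T` vanishes in the limit. Hence it converges to the limit
of the integrand at `T`, here `ξ(T) ^ 2`.
-/

open MeasureTheory Set Filter Topology intervalIntegral

theorem continuousOn_of_dist_le_rpow {X Y : Type*} [PseudoMetricSpace X] [PseudoMetricSpace Y]
    {f : X → Y} {s : Set X} {C γ : ℝ} (hγ : 0 < γ)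
    (hf : ∀ x ∈ s, ∀ y ∈ s, dist (f y) (f x) ≤ C * dist y x ^ γ) : ContinuousOn f s := by
  intro x hx
  have hpow : Tendsto (fun y => C * dist y x ^ γ) (𝓝[s] x) (𝓝 0) := by
    have h : Continuous fun y => C * dist y x ^ γ :=
      continuous_const.mul ((continuous_id.dist continuous_const).rpow_const fun _ => Or.inr hγ.le)
    simpa [Real.zero_rpow hγ.ne'] using (h.tendsto x).mono_left nhdsWithin_le_nhds
  refine tendsto_iff_dist_tendsto_zero.2
    (squeeze_zero' (Eventually.of_forall fun _ => dist_nonneg) ?_ hpow)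
  filter_upwards [self_mem_nhdsWithin] with y hy using hf x hx y hy

section CesaroKernel

variable {f : ℝ → ℝ} {a b c q t M L : ℝ}

theorem integral_sub_rpow_neg_sub_one (hq : q ≠ 0) (ha : a < b) (ht : t < b) :
    ∫ s in a..t, (b - s) ^ (-q - 1) = ((b - t) ^ (-q) - (b - a) ^ (-q)) / q := by
  rw [integral_comp_sub_left (fun x => x ^ (-q - 1)), integral_rpow
    (Or.inr ⟨by contrapose! hq; linarith, notMem_uIcc_of_lt (by linarith) (by linarith)⟩),
    show -q - 1 + 1 = -q by ring]
  ring

theorem intervalIntegrable_mul_sub_rpow (hf : ContinuousOn f (Ico a b)) (p : ℝ)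
    (ht : t ∈ Ico a b) : IntervalIntegrable (fun s => f s * (b - s) ^ p) volume a t := by
  refine ContinuousOn.intervalIntegrable_of_Icc ht.1 (ContinuousOn.mul ?_ ?_)
  · exact hf.mono (Icc_subset_Ico_right ht.2)
  · exact ContinuousOn.rpow_const (by fun_prop) fun s hs => Or.inl (by linarith [hs.2, ht.2])

theorem sub_rpow_mul_sub_rpow_neg (hbt : t < b) : (b - t) ^ q * (b - t) ^ (-q) = 1 := by
  rw [Real.rpow_neg (sub_nonneg.2 hbt.le),
    mul_inv_cancel₀ (Real.rpow_pos_of_pos (sub_pos.2 hbt) _).ne']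

theorem tendsto_sub_rpow_nhdsLT (hq : 0 < q) :
    Tendsto (fun t => (b - t) ^ q) (𝓝[<] b) (𝓝 0) := by
  have h : Continuous fun t : ℝ => (b - t) ^ q :=
    (continuous_const.sub continuous_id).rpow_const fun _ => Or.inr hq.le
  simpa [Real.zero_rpow hq.ne'] using (h.tendsto b).mono_left nhdsWithin_le_nhds

theorem abs_rpow_mul_integral_le (hq : 0 < q) (hM : ∀ s ∈ Ioo c b, |f s| ≤ M)
    (ht : t ∈ Ioo c b) : |(b - t) ^ q * ∫ s in c..t, f s * (b - s) ^ (-q - 1)| ≤ M / q := by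
  have hM0 : 0 ≤ M := (abs_nonneg _).trans (hM t ht)
  have hbt : 0 < b - t := sub_pos.2 ht.2
  have hintegral : |∫ s in c..t, f s * (b - s) ^ (-q - 1)|
      ≤ ∫ s in c..t, M * (b - s) ^ (-q - 1) := by
    rw [← Real.norm_eq_abs]
    refine norm_integral_le_of_norm_le ht.1.le (Eventually.of_forall fun s hs => ?_)
      (intervalIntegrable_mul_sub_rpow continuousOn_const _ ⟨ht.1.le, ht.2⟩)
    have hsb : 0 < b - s := by linarith [hs.2, ht.2]
    rw [Real.norm_eq_abs, abs_mul, abs_of_pos (Real.rpow_pos_of_pos hsb _)]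
    exact mul_le_mul_of_nonneg_right (hM s ⟨hs.1, by linarith [hs.2, ht.2]⟩)
      (Real.rpow_nonneg hsb.le _)
  calc |(b - t) ^ q * ∫ s in c..t, f s * (b - s) ^ (-q - 1)|
      ≤ (b - t) ^ q * (M * (((b - t) ^ (-q) - (b - c) ^ (-q)) / q)) := by
        rw [abs_mul, abs_of_pos (Real.rpow_pos_of_pos hbt _),
          ← integral_sub_rpow_neg_sub_one hq.ne' (ht.1.trans ht.2) ht.2,
          ← intervalIntegral.integral_const_mul]
        exact mul_le_mul_of_nonneg_left hintegral (Real.rpow_nonneg hbt.le _)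
    _ ≤ (b - t) ^ q * (M * ((b - t) ^ (-q) / q)) := by
        gcongr
        linarith [Real.rpow_nonneg (sub_nonneg.2 (ht.1.trans ht.2).le) (-q)]
    _ = M / q * ((b - t) ^ q * (b - t) ^ (-q)) := by ring
    _ = M / q := by rw [sub_rpow_mul_sub_rpow_neg ht.2, mul_one]

theorem tendsto_rpow_mul_integral_of_tendsto_zero (hab : a < b) (hq : 0 < q)
    (hf : ContinuousOn f (Ico a b)) (hlim : Tendsto f (𝓝[<] b) (𝓝 0)) :
    Tendsto (fun t => (b - t) ^ q * ∫ s in a..t, f s * (b - s) ^ (-q - 1)) (𝓝[<] b) (𝓝 0) := by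
  rw [Metric.tendsto_nhds]
  intro ε hε
  obtain ⟨c, hcb, hc⟩ := mem_nhdsLT_iff_exists_Ioo_subset.1
    ((Metric.tendsto_nhds.1 hlim) (ε * q / 2) (by positivity))
  set c' := max a c
  have hhead : Tendsto (fun t => (b - t) ^ q * ∫ s in a..c', f s * (b - s) ^ (-q - 1))
      (𝓝[<] b) (𝓝 0) := by
    simpa using (tendsto_sub_rpow_nhdsLT hq).mul_const (∫ s in a..c', f s * (b - s) ^ (-q - 1))
  filter_upwards [(Metric.tendsto_nhds.1 hhead) (ε / 2) (half_pos hε),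
    Ioo_mem_nhdsLT (max_lt hab hcb)] with t hhead ht
  have htail := abs_rpow_mul_integral_le (f := f) (M := ε * q / 2) hq
    (fun s hs => (by simpa [Real.dist_eq] using hc ⟨(le_max_right a c).trans_lt hs.1, hs.2⟩ :
      |f s| < ε * q / 2).le) ht
  rw [← integral_add_adjacent_intervals
    (intervalIntegrable_mul_sub_rpow hf _ ⟨le_max_left a c, max_lt hab hcb⟩)
    (intervalIntegrable_mul_sub_rpow (hf.mono (Ico_subset_Ico_left (le_max_left a c))) _
      ⟨ht.1.le, ht.2⟩), mul_add]
  rw [Real.dist_eq, sub_zero] at hhead ⊢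
  calc _ ≤ _ := abs_add_le _ _
    _ < ε / 2 + ε * q / 2 / q := add_lt_add_of_lt_of_le hhead htail
    _ = ε := by field_simp; ring

theorem tendsto_rpow_mul_integral (hab : a < b) (hq : 0 < q) (hf : ContinuousOn f (Ico a b))
    (hlim : Tendsto f (𝓝[<] b) (𝓝 L)) :
    Tendsto (fun t => (b - t) ^ q * ∫ s in a..t, f s * (b - s) ^ (-q - 1)) (𝓝[<] b)
      (𝓝 (L / q)) := by
  have hfluct := tendsto_rpow_mul_integral_of_tendsto_zero (f := fun s => f s - L) hab hq
    (hf.sub continuousOn_const) (by simpa using hlim.sub_const L)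
  have hconst : Tendsto (fun t => L / q * (1 - (b - t) ^ q * (b - a) ^ (-q))) (𝓝[<] b)
      (𝓝 (L / q)) := by
    simpa using (((tendsto_sub_rpow_nhdsLT hq).mul_const ((b - a) ^ (-q))).const_sub 1).const_mul
      (L / q)
  refine (by simpa using hfluct.add hconst : Tendsto _ _ (𝓝 (L / q))).congr' ?_
  filter_upwards [Ioo_mem_nhdsLT hab] with t ht
  have hint := intervalIntegrable_mul_sub_rpow hf (-q - 1) (Ioo_subset_Ico_self ht)
  simp only [sub_mul]
  rw [intervalIntegral.integral_sub hint (intervalIntegrable_mul_sub_rpow continuousOn_const _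
    (Ioo_subset_Ico_self ht)), intervalIntegral.integral_const_mul,
    integral_sub_rpow_neg_sub_one hq.ne' hab ht.2]
  linear_combination (-L / q) * sub_rpow_mul_sub_rpow_neg (q := q) ht.2

end CesaroKernel

theorem stmt16_general (T α γ C : ℝ) (ξ : ℝ → ℝ) (hT : 0 < T)
    (hα : α ∈ Set.Ioo (0:ℝ) (1/2)) (hγ : 0 < γ)
    (hHolder : ∀ s ∈ Set.Icc (0:ℝ) T, ∀ t ∈ Set.Icc (0:ℝ) T,
      |ξ t - ξ s| ≤ C * |t - s| ^ γ) :
    Filter.Tendsto (fun t : ℝ =>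
      (T - t) ^ (1 - 2*α) * ∫ s in Set.Ioo (0:ℝ) t, (ξ s) ^ 2 * (T - s) ^ (2*α - 2))
      (nhdsWithin T (Set.Iio T)) (nhds ((ξ T) ^ 2 / (1 - 2*α))) := by
  have hξ : ContinuousOn ξ (Icc 0 T) :=
    continuousOn_of_dist_le_rpow hγ (by simpa only [Real.dist_eq] using hHolder)
  have hlim : Tendsto ξ (𝓝[<] T) (𝓝 (ξ T)) := by
    rw [← nhdsWithin_Ioo_eq_nhdsLT hT]
    exact (hξ T (right_mem_Icc.2 hT.le)).mono Ioo_subset_Icc_self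
  have h := tendsto_rpow_mul_integral (f := fun s => ξ s ^ 2) (q := 1 - 2 * α) hT
    (by linarith [hα.2]) ((hξ.pow 2).mono Ico_subset_Icc_self) (hlim.pow 2)
  rw [show -(1 - 2 * α) - 1 = 2 * α - 2 by ring] at h
  refine h.congr' ?_
  filter_upwards [Ioo_mem_nhdsLT hT] with t ht
  rw [intervalIntegral.integral_of_le ht.1.le, integral_Ioc_eq_integral_Ioo]

theorem stmt16 (T α γ C : ℝ) (ξ : ℝ → ℝ) (hT : 0 < T)
    (hα : α ∈ Set.Ioo (0:ℝ) (1/2)) (hγ : 0 < γ) (hC : 0 < C)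
    (hHolder : ∀ s ∈ Set.Icc (0:ℝ) T, ∀ t ∈ Set.Icc (0:ℝ) T,
      |ξ t - ξ s| ≤ C * |t - s| ^ γ) :
    Filter.Tendsto (fun t : ℝ =>
      (T - t) ^ (1 - 2*α) * ∫ s in Set.Ioo (0:ℝ) t, (ξ s) ^ 2 * (T - s) ^ (2*α - 2))
      (nhdsWithin T (Set.Iio T)) (nhds ((ξ T) ^ 2 / (1 - 2*α))) :=
  stmt16_general T α γ C ξ hT hα hγ hHolder
end
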